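/- Let R be a finitely generated integral ℚ-algebra, h ∈ R nonzero, and δ a locally nilpotent derivation of the localization R_h. Then there exists m ∈ ℕ such that h^m·δ maps R into R, and h^m·δ restricted to R is a locally nilpotent derivation of R. -/

import Mathlib

/-!
A locally nilpotent derivation `δ` of a domain of characteristic zero kills units: if `p`, `q` are
the largest exponents with `δᵖ u ≠ 0`, `δ^q v ≠ 0`, the Leibniz rule gives
`δ^(p+q) (u v) = (p+q).choose p • δᵖ u • δ^q v ≠ 0`, which for `u v = 1` forces `p = 0`.
Hence `δ (h^m) = 0`, so `(h^m • δ)^n = h^(m n) • δ^n` is again locally nilpotent. Taking `m`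
to clear the denominators of `δ` on finitely many generators of `R`, `h^m • δ` maps `R` into
`R`, because the elements of `R` sent into `R` by a derivation form a subalgebra.
-/

open Finset

theorem Function.exists_iterate_ne_and_iterate_succ_eq {α : Type*} {f : α → α} {a b : α}
    (hab : a ≠ b) (hn : ∃ n, f^[n] a = b) : ∃ p, f^[p] a ≠ b ∧ f^[p + 1] a = b := by
  classical
  have hpos : Nat.find hn ≠ 0 := fun h0 => hab (by simpa [h0] using Nat.find_spec hn)
  refine ⟨Nat.find hn - 1, Nat.find_min hn (by omega), ?_⟩
  rw [Nat.sub_add_cancel (Nat.one_le_iff_ne_zero.mpr hpos)]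
  exact Nat.find_spec hn

namespace Derivation

def ofAddLeibniz {A : Type*} [CommRing A] [Algebra ℚ A] (d : A → A)
    (hadd : ∀ a b, d (a + b) = d a + d b) (hleib : ∀ a b, d (a * b) = a * d b + b * d a) :
    Derivation ℚ A A :=
  mk' ⟨⟨d, hadd⟩, map_rat_smul (AddMonoidHom.mk' d hadd)⟩ hleib

section Iterate

variable {K A : Type*} [CommRing K] [CommRing A] [Algebra K A] (D : Derivation K A A)

theorem iterate_leibniz (a b : A) (n : ℕ) :
    D^[n] (a * b) = ∑ ij ∈ antidiagonal n, n.choose ij.1 • (D^[ij.1] a * D^[ij.2] b) := by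
  induction n with
  | zero => simp
  | succ n ih =>
    rw [sum_antidiagonal_choose_succ_nsmul (fun i j => D^[i] a * D^[j] b),
      Function.iterate_succ_apply', ih, map_sum, ← sum_add_distrib]
    refine sum_congr rfl fun ij hij => ?_
    rw [Nat.choose_symm_of_eq_add (HasAntidiagonal.mem_antidiagonal.mp hij).symm, map_nsmul,
      leibniz, smul_eq_mul, smul_eq_mul, Function.iterate_succ_apply', Function.iterate_succ_apply',
      ← Nat.choose_symm_of_eq_add (HasAntidiagonal.mem_antidiagonal.mp hij).symm, ← smul_add]
    ring

theorem iterate_eq_zero_of_le {a : A} {p n : ℕ} (ha : D^[p] a = 0) (hpn : p ≤ n) :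
    D^[n] a = 0 := by
  rw [← Nat.sub_add_cancel hpn, Function.iterate_add_apply, ha,
    Function.iterate_fixed D.map_zero]

theorem iterate_mul_of_iterate_succ_eq_zero {a b : A} {p q : ℕ} (ha : D^[p + 1] a = 0)
    (hb : D^[q + 1] b = 0) :
    D^[p + q] (a * b) = (p + q).choose p • (D^[p] a * D^[q] b) := by
  rw [iterate_leibniz, sum_eq_single_of_mem (p, q) (HasAntidiagonal.mem_antidiagonal.mpr rfl)]
  rintro ⟨i, j⟩ hij hne
  have hcases : q < j ∨ p < i := by
    rw [HasAntidiagonal.mem_antidiagonal] at hij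
    rw [Ne, Prod.mk.injEq] at hne
    omega
  rcases hcases with hj | hi
  · rw [D.iterate_eq_zero_of_le hb hj, mul_zero, smul_zero]
  · rw [D.iterate_eq_zero_of_le ha hi, zero_mul, smul_zero]

theorem apply_eq_zero_of_isUnit [IsDomain A] [CharZero A] (hD : ∀ a, ∃ n, D^[n] a = 0)
    {u : A} (hu : IsUnit u) : D u = 0 := by
  obtain ⟨v, huv⟩ := hu.exists_right_inv
  obtain ⟨p, hp, hp'⟩ := Function.exists_iterate_ne_and_iterate_succ_eq hu.ne_zero (hD u)
  obtain ⟨q, hq, hq'⟩ :=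
    Function.exists_iterate_ne_and_iterate_succ_eq (right_ne_zero_of_mul_eq_one huv) (hD v)
  have hne : D^[p + q] (u * v) ≠ 0 := by
    rw [D.iterate_mul_of_iterate_succ_eq_zero hp' hq']
    exact smul_ne_zero (Nat.choose_pos (Nat.le_add_right p q)).ne' (mul_ne_zero hp hq)
  obtain rfl : p = 0 := by
    by_contra hp0
    rw [huv, ← Nat.sub_add_cancel (show 1 ≤ p + q by omega), Function.iterate_succ_apply,
      D.map_one_eq_zero, Function.iterate_fixed D.map_zero] at hne
    exact hne rfl
  simpa using hp'

theorem iterate_smul_apply_of_apply_eq_zero {c : A} (hc : D c = 0) (n : ℕ) (a : A) :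
    (c • D)^[n] a = c ^ n * D^[n] a := by
  induction n generalizing a with
  | zero => simp
  | succ n ih =>
    have hcn : D (c ^ n) = 0 := by rw [leibniz_pow, hc, smul_zero, smul_zero]
    rw [Function.iterate_succ_apply', ih, Function.iterate_succ_apply', smul_apply, leibniz, hcn,
      smul_zero, add_zero, smul_eq_mul, smul_eq_mul, pow_succ', mul_assoc]

end Iterate

section Restrict

variable {K R L : Type*} [CommRing K] [CommRing R] [CommRing L] [Algebra K R] [Algebra K L]
  [Algebra R L] [IsScalarTower K R L]

theorem isInteger_of_adjoin_eq_top (δ : Derivation K L L) {s : Set R}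
    (hs : Algebra.adjoin K s = ⊤)
    (hδ : ∀ r ∈ s, IsLocalization.IsInteger R (δ (algebraMap R L r)))
    (r : R) : IsLocalization.IsInteger R (δ (algebraMap R L r)) := by
  have hr : r ∈ Algebra.adjoin K s := hs ▸ Algebra.mem_top
  induction hr using Algebra.adjoin_induction with
  | mem r hr => exact hδ r hr
  | algebraMap k =>
    rw [← IsScalarTower.algebraMap_apply, δ.map_algebraMap]
    exact zero_mem _
  | add a b _ _ ha hb =>
    rw [map_add, map_add]
    exact add_mem ha hb
  | mul a b _ _ ha hb =>
    obtain ⟨ta, hta⟩ := ha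
    obtain ⟨tb, htb⟩ := hb
    refine ⟨a * tb + b * ta, ?_⟩
    rw [map_mul, leibniz, smul_eq_mul, smul_eq_mul, ← hta, ← htb]
    simp only [map_add, map_mul]

theorem exists_restrict_of_isInteger (hinj : Function.Injective (algebraMap R L))
    (δ : Derivation K L L) (hδ : ∀ r, IsLocalization.IsInteger R (δ (algebraMap R L r))) :
    ∃ D : Derivation K R R, ∀ r, algebraMap R L (D r) = δ (algebraMap R L r) := by
  choose D hD using hδ
  refine ⟨mk' ⟨⟨D, fun a b => hinj ?_⟩, fun k a => hinj ?_⟩ fun a b => hinj ?_, hD⟩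
  · simp only [hD, map_add]
  · simp only [hD, RingHom.id_apply, Algebra.smul_def, map_mul, leibniz,
      ← IsScalarTower.algebraMap_apply, δ.map_algebraMap, mul_zero, add_zero]
  · change algebraMap R L (D (a * b)) = algebraMap R L (a * D b + b * D a)
    simp only [hD, map_mul, map_add, leibniz, smul_eq_mul]

end Restrict

end Derivation

/-- Let `R` be a finitely generated integral `ℚ`-algebra, `h ∈ R` nonzero, and `δ` a
locally nilpotent derivation of the localization `R_h`.  Then there is `m : ℕ` such that
`h^m δ` maps (the image of) `R` into itself, and the restriction is a locally nilpotent
derivation of `R`. -/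
theorem lnd_localization_extend {R : Type*} [CommRing R] [IsDomain R] [Algebra ℚ R]
    (hfg : Algebra.FiniteType ℚ R) (h : R) (hh : h ≠ 0)
    (d : Localization.Away h → Localization.Away h)
    (hadd : ∀ a b, d (a + b) = d a + d b)
    (hleib : ∀ a b, d (a * b) = a * d b + b * d a)
    (hln : ∀ a, ∃ n : ℕ, d^[n] a = 0) :
    ∃ (m : ℕ) (D : R → R),
      (∀ r : R, algebraMap R (Localization.Away h) (D r)
          = algebraMap R (Localization.Away h) h ^ m * d (algebraMap R (Localization.Away h) r)) ∧
      (∀ a b : R, D (a + b) = D a + D b) ∧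
      (∀ a b : R, D (a * b) = a * D b + b * D a) ∧
      (∀ a : R, ∃ n : ℕ, D^[n] a = 0) := by
  have hle := powers_le_nonZeroDivisors_of_noZeroDivisors hh
  have hinj := IsLocalization.injective (Localization.Away h) hle
  have : IsDomain (Localization.Away h) := IsLocalization.isDomain_of_le_nonZeroDivisors _ hle
  have : CharZero (Localization.Away h) :=
    charZero_of_injective_algebraMap (algebraMap ℚ _).injective
  set δ := Derivation.ofAddLeibniz d hadd hleib
  have hδ : ∀ a, ∃ n, δ^[n] a = 0 := hln
  obtain ⟨s, hs⟩ := hfg.out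
  obtain ⟨⟨_, m, rfl⟩, hm⟩ := IsLocalization.exist_integer_multiples (Submonoid.powers h) s
    fun r => δ (algebraMap R (Localization.Away h) r)
  set c := algebraMap R (Localization.Away h) h ^ m
  have hc : δ c = 0 := δ.apply_eq_zero_of_isUnit hδ
    ((IsLocalization.map_units (Localization.Away h) ⟨h, Submonoid.mem_powers h⟩).pow m)
  obtain ⟨D, hD⟩ := (c • δ).exists_restrict_of_isInteger hinj
    ((c • δ).isInteger_of_adjoin_eq_top hs fun r hr => 
      by simpa [c, Algebra.smul_def] using hm r hr)
  refine ⟨m, D, hD, D.map_add, fun a b => D.leibniz a b, fun a => ?_⟩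
  obtain ⟨n, hn⟩ := hδ (algebraMap R (Localization.Away h) a)
  refine ⟨n, hinj ?_⟩
  rw [Function.Semiconj.iterate_right hD n a, δ.iterate_smul_apply_of_apply_eq_zero hc, hn,
    mul_zero, map_zero]
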